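/- arXiv:0811.4712 — 2 statements merged into one kernel-verified Lean document; each statement's English description precedes it below -/
import Mathlib

section
/- The series A defined by A = Y + w(A/Y) + (Y∖A) + w(A/Y∖A) equals the sum over all planar binary trees t (with ≥1 vertex) of w^{r(t)−1} t, where r(t) is the number of right-oriented leaves of t. -/
/-- Planar binary trees: a leaf, or an internal vertex with two subtrees. -/
inductive PBT : Type
  | leaf : PBT
  | node : PBT → PBT → PBT
  deriving DecidableEq

namespace PBT

/-- Number of internal vertices of a planar binary tree. -/
def size : PBT → ℕ
  | leaf => 0
  | node l r => size l + size r + 1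

/-- `under u v` ("u ∖ v") grafts `v` at the rightmost leaf of `u`. -/
def under : PBT → PBT → PBT
  | leaf, v => v
  | node l r, v => node l (under r v)

/-- `overTree u v` ("u / v") grafts `u` at the leftmost leaf of `v`. -/
def overTree (u : PBT) : PBT → PBT
  | leaf => u
  | node l r => node (overTree u l) r

/-- Number of internal vertices on the rightmost path (right spine). -/
def rightSpine : PBT → ℕ
  | leaf => 0
  | node _ r => rightSpine r + 1

/-- The left comb with `p` internal vertices. -/
def leftComb : ℕ → PBT
  | 0 => leaf
  | p + 1 => node (leftComb p) leaf

/-- The right comb with `q` internal vertices. -/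
def rightComb : ℕ → PBT
  | 0 => leaf
  | q + 1 => node leaf (rightComb q)

/-- The list of all factorizations `t = u ∖ v` (each exactly once). -/
def underFactors : PBT → List (PBT × PBT)
  | leaf => [(leaf, leaf)]
  | node l r => (leaf, node l r) :: (underFactors r).map (fun p => (node l p.1, p.2))

/-- The list of all factorizations `t = u / v` (each exactly once). -/
def overFactors : PBT → List (PBT × PBT)
  | leaf => [(leaf, leaf)]
  | node l r => (node l r, leaf) :: (overFactors l).map (fun p => (p.1, node p.2 r))

/-- Convolution of tree-expanded series dual to the over product:
`(A / B)_w = Σ_{s / t = w} A_s B_t`. -/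
def overConv {R : Type*} [CommRing R] (f g : PBT → R) (w : PBT) : R :=
  ((overFactors w).map (fun p => f p.1 * g p.2)).sum

/-- Convolution of tree-expanded series dual to the under product:
`(A ∖ B)_w = Σ_{s ∖ t = w} A_s B_t`. -/
def underConv {R : Type*} [CommRing R] (f g : PBT → R) (w : PBT) : R :=
  ((underFactors w).map (fun p => f p.1 * g p.2)).sum

/-- The list of all planar binary trees with `n` internal vertices. -/
def treesOfSize : ℕ → List PBT
  | 0 => [leaf]
  | n + 1 =>
    (List.range (n + 1)).attach.flatMap (fun i =>
      (treesOfSize i.1).flatMap (fun l =>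
        (treesOfSize (n - i.1)).map (fun r => node l r)))
  termination_by n => n
  decreasing_by
  · exact Nat.lt_succ_of_le (Nat.sub_le _ _)
  · exact List.mem_range.mp i.2

/-- `treePow B t` is the series `B^t = μ_t(B,…,B)`, the substitution of the
series `B` in all internal vertices of `t` (duplicial operad composition),
using the decomposition `l ∨ r = (l / Y) ∖ r`. -/
def treePow {R : Type*} [CommRing R] (B : PBT → R) : PBT → PBT → R
  | leaf => fun w => if w = leaf then 1 else 0
  | node l r => underConv (overConv (treePow B l) B) (treePow B r)

/-- Composition of tree-expanded series: `(A ∘ B)_w = Σ_t A_t (B^t)_w`,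
where only trees with at most `|w|` vertices can contribute. -/
def comp {R : Type*} [CommRing R] (A B : PBT → R) (w : PBT) : R :=
  (((List.range (size w + 1)).flatMap treesOfSize).map
    (fun t => A t * treePow B t w)).sum

/-- The series reduced to the one-vertex tree `Y`. -/
def Yser {R : Type*} [CommRing R] : PBT → R :=
  fun t => if t = node leaf leaf then 1 else 0

/-- The series reduced to the root tree `|` (unit for the over/under products). -/
def unitSer {R : Type*} [CommRing R] : PBT → R :=
  fun t => if t = leaf then 1 else 0

/-- Suspension of a tree-expanded series: the coefficient on a tree with `n`
internal vertices is multiplied by `(-1)^(n-1)`. -/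
def susp {R : Type*} [CommRing R] (A : PBT → R) : PBT → R :=
  fun t => (-1 : R) ^ (size t + 1) * A t

/-- One covering step of the Tamari order: a right rotation
`(a ∨ b) ∨ c ⟶ a ∨ (b ∨ c)` somewhere in the tree. -/
inductive TamariStep : PBT → PBT → Prop
  | rot (a b c : PBT) : TamariStep (node (node a b) c) (node a (node b c))
  | left {l l' : PBT} (r : PBT) : TamariStep l l' → TamariStep (node l r) (node l' r)
  | right (l : PBT) {r r' : PBT} : TamariStep r r' → TamariStep (node l r) (node l r')

/-- The Tamari partial order on planar binary trees. -/
def tle : PBT → PBT → Prop := Relation.ReflTransGen TamariStep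

end PBT

open PBT in
/-- Number of right-oriented leaves of a planar binary tree. -/
def rightLeaves : PBT → ℕ
  | PBT.leaf => 0
  | PBT.node l PBT.leaf => rightLeaves l + 1
  | PBT.node l (PBT.node r1 r2) => rightLeaves l + rightLeaves (PBT.node r1 r2)

/-!
Evaluated at a tree `l ∨ r`, the convolutions with `Y` only see the factorizations through the
root, and the equation becomes `A_{l∨r} = (δ_l + w A_l) (δ_r + A_r)` with `δ` the unit series,
together with `A_| = 0`. The series `t ↦ w^{r(t)-1}` (zero at `|`) obeys the same recursion,
since `δ_t + w · w^{r(t)-1} = w^{r(t)}`, `δ_t + w^{r(t)-1} = w^{r(t)-1}`, and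
`r(l ∨ r) - 1 = r(l) + (r(r) - 1)`. Induction on trees then identifies the two.
-/

namespace PBT

variable {R : Type*} [CommRing R]

lemma overConv_leaf (f g : PBT → R) : overConv f g leaf = f leaf * g leaf := by
  simp [overConv, overFactors]

lemma underConv_leaf (f g : PBT → R) : underConv f g leaf = f leaf * g leaf := by
  simp [underConv, underFactors]

lemma overConv_node (f g : PBT → R) (l r : PBT) :
    overConv f g (node l r) = f (node l r) * g leaf + overConv f (fun v => g (node v r)) l := by
  simp [overConv, overFactors, Function.comp_def]

lemma underConv_node (f g : PBT → R) (l r : PBT) :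
    underConv f g (node l r) = f leaf * g (node l r) + underConv (fun u => f (node l u)) g r := by
  simp [underConv, underFactors, Function.comp_def]

lemma overConv_mul_const (f g : PBT → R) (c : R) (t : PBT) :
    overConv f (fun v => g v * c) t = overConv f g t * c := by
  simp [overConv, ← List.sum_map_mul_right, mul_assoc]

lemma underConv_const_mul (f g : PBT → R) (c : R) (t : PBT) :
    underConv (fun u => c * f u) g t = c * underConv f g t := by
  simp [underConv, ← List.sum_map_mul_left, mul_assoc]

lemma overConv_unitSer (f : PBT → R) : overConv f unitSer = f := by
  funext t
  cases t with
  | leaf => simp [overConv_leaf, unitSer]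
  | node l r =>
    rw [overConv_node]
    simp [unitSer, overConv]

lemma unitSer_underConv (g : PBT → R) : underConv unitSer g = g := by
  funext t
  cases t with
  | leaf => simp [underConv_leaf, unitSer]
  | node l r =>
    rw [underConv_node]
    simp [unitSer, underConv]

lemma Yser_leaf : (Yser leaf : R) = 0 := by
  simp [Yser]

lemma Yser_node (l r : PBT) : (Yser (node l r) : R) = unitSer l * unitSer r := by
  by_cases hl : l = leaf <;> by_cases hr : r = leaf <;> simp [Yser, unitSer, hl, hr]

lemma overConv_Yser_node (f : PBT → R) (l r : PBT) :
    overConv f Yser (node l r) = f l * unitSer r := by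
  simp only [overConv_node, Yser_leaf, Yser_node, mul_zero, zero_add, overConv_mul_const,
    overConv_unitSer]

lemma underConv_Yser_node (g : PBT → R) (l r : PBT) :
    underConv Yser g (node l r) = unitSer l * g r := by
  simp only [underConv_node, Yser_leaf, Yser_node, zero_mul, zero_add, underConv_const_mul,
    unitSer_underConv]

lemma underConv_overConv_Yser_node (f g : PBT → R) (l r : PBT) :
    underConv (overConv f Yser) g (node l r) = f l * g r := by
  simp only [underConv_node, overConv_leaf, overConv_Yser_node, Yser_leaf, mul_zero, zero_mul,
    zero_add, underConv_const_mul, unitSer_underConv]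

/-- The right-hand side `Y + w(A/Y) + (Y∖A) + w(A/Y∖A)` of the defining equation of `A`. -/
def seriesAMap (w : R) (A : PBT → R) : PBT → R :=
  fun t => Yser t + w * overConv A Yser t + underConv Yser A t
    + w * underConv (overConv A Yser) A t

lemma seriesAMap_leaf (w : R) (A : PBT → R) : seriesAMap w A leaf = 0 := by
  simp [seriesAMap, overConv_leaf, underConv_leaf, Yser_leaf]

lemma seriesAMap_node (w : R) (A : PBT → R) (l r : PBT) :
    seriesAMap w A (node l r) = (unitSer l + w * A l) * (unitSer r + A r) := by
  rw [seriesAMap, Yser_node, overConv_Yser_node, underConv_Yser_node,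
    underConv_overConv_Yser_node]
  ring

lemma rightLeaves_pos : ∀ {t : PBT}, t ≠ leaf → 0 < rightLeaves t
  | leaf, h => absurd rfl h
  | node l leaf, _ => by simp [rightLeaves]
  | node l (node a b), _ => by
    have := rightLeaves_pos (t := node a b) nofun
    simp only [rightLeaves]
    omega

lemma rightLeaves_node_sub_one (l r : PBT) :
    rightLeaves (node l r) - 1 = rightLeaves l + (rightLeaves r - 1) := by
  cases r with
  | leaf => simp [rightLeaves]
  | node a b =>
    have := rightLeaves_pos (t := node a b) nofun
    simp only [rightLeaves]
    omega

def rightLeavesSeries (w : R) (t : PBT) : R :=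
  if t = leaf then 0 else w ^ (rightLeaves t - 1)

-- At the leaf both sides are `1`, the right one because `0 - 1 = 0` in `ℕ`.
lemma unitSer_add_rightLeavesSeries (w : R) (t : PBT) :
    unitSer t + rightLeavesSeries w t = w ^ (rightLeaves t - 1) := by
  by_cases ht : t = leaf <;> simp [unitSer, rightLeavesSeries, ht, rightLeaves]

lemma unitSer_add_mul_rightLeavesSeries (w : R) (t : PBT) :
    unitSer t + w * rightLeavesSeries w t = w ^ rightLeaves t := by
  by_cases ht : t = leaf
  · simp [unitSer, rightLeavesSeries, ht, rightLeaves]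
  · rw [unitSer, rightLeavesSeries, if_neg ht, if_neg ht, zero_add, ← pow_succ',
      Nat.sub_add_cancel (rightLeaves_pos ht)]

theorem eq_rightLeavesSeries_of_isFixedPt {w : R} {A : PBT → R}
    (hA : Function.IsFixedPt (seriesAMap w) A) : A = rightLeavesSeries w := by
  funext t
  induction t with
  | leaf => rw [← hA, seriesAMap_leaf, rightLeavesSeries, if_pos rfl]
  | node l r ihl ihr =>
    rw [← hA, seriesAMap_node, ihl, ihr, unitSer_add_mul_rightLeavesSeries,
      unitSer_add_rightLeavesSeries, ← pow_add, ← rightLeaves_node_sub_one, rightLeavesSeries,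
      if_neg nofun]

end PBT

open PBT Polynomial in
theorem series_A_coefficients_general (A : PBT → Polynomial ℚ)
    (hA : ∀ t : PBT, A t = Yser t + X * overConv A Yser t + underConv Yser A t
        + X * underConv (overConv A Yser) A t) :
    ∀ t : PBT, t ≠ PBT.leaf → A t = X ^ (rightLeaves t - 1) := by
  intro t ht
  have hfix : Function.IsFixedPt (seriesAMap X) A := funext fun t => (hA t).symm
  rw [eq_rightLeavesSeries_of_isFixedPt hfix, rightLeavesSeries, if_neg ht]

open PBT Polynomial in
/-- the series `A = Y + w(A/Y) + (Y∖A) + w(A/Y∖A)` is the sum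
over all trees `t` with at least one vertex of `w^{r(t)-1} t`, where `r(t)`
is the number of right-oriented leaves of `t`. -/
theorem series_A_coefficients (A : PBT → Polynomial ℚ)
    (hA0 : A PBT.leaf = 0)
    (hA : ∀ t : PBT, A t = Yser t + X * overConv A Yser t + underConv Yser A t
        + X * underConv (overConv A Yser) A t) :
    ∀ t : PBT, t ≠ PBT.leaf → A t = X ^ (rightLeaves t - 1) :=
  series_A_coefficients_general A hA
end

section
/- In the Tamari lattice on Y_n, for a tree of the form Y ∖ t, i.e. the tree obtained by grafting t at the rightmost leaf of the one-vertex tree Y, the Möbius number μ(c_n, Y ∖ t) is nonzero if and only if Y ∖ t is the right comb d_n, in which case it equals (−1)^{n−1}. -/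
namespace PBT

/-- `over u v` ("u / v") grafts `u` at the leftmost leaf of `v`. -/
def overGraft (u : PBT) : PBT → PBT
  | leaf => u
  | node l r => node (overGraft u l) r

end PBT

namespace PBT

/-! ### Basic size lemmas -/

lemma step_size {z z' : PBT} (h : TamariStep z z') : size z' = size z := by
  induction h with
  | rot a b c => simp [size]; omega
  | left r h ih => simp [size, ih]
  | right l h ih => simp [size, ih]

lemma tle_size {z w : PBT} (h : tle z w) : size z = size w := by
  induction h with
  | refl => rfl
  | tail h1 h2 ih => rw [ih, (step_size h2).symm]

lemma size_eq_zero {t : PBT} (h : size t = 0) : t = leaf := by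
  cases t with
  | leaf => rfl
  | node l r => simp [size] at h

@[simp] lemma size_leftComb : ∀ n, size (leftComb n) = n
  | 0 => rfl
  | n + 1 => by simp [leftComb, size, size_leftComb n]

@[simp] lemma size_rightComb : ∀ n, size (rightComb n) = n
  | 0 => rfl
  | n + 1 => by simp [rightComb, size, size_rightComb n]

/-! ### tle basics -/

lemma tle_refl (z : PBT) : tle z z := Relation.ReflTransGen.refl

lemma tle_trans {a b c : PBT} (h1 : tle a b) (h2 : tle b c) : tle a c :=
  Relation.ReflTransGen.trans h1 h2

lemma tle_node_left {l l' : PBT} (r : PBT) (h : tle l l') :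
    tle (node l r) (node l' r) := by
  induction h with
  | refl => exact tle_refl _
  | tail h1 h2 ih => exact Relation.ReflTransGen.tail ih (TamariStep.left r h2)

lemma tle_node_right (l : PBT) {r r' : PBT} (h : tle r r') :
    tle (node l r) (node l r') := by
  induction h with
  | refl => exact tle_refl _
  | tail h1 h2 ih => exact Relation.ReflTransGen.tail ih (TamariStep.right l h2)

lemma tle_node {l l' r r' : PBT} (h1 : tle l l') (h2 : tle r r') :
    tle (node l r) (node l' r') :=
  tle_trans (tle_node_left r h1) (tle_node_right l' h2)

/-! ### the left comb is the minimum -/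

lemma leftComb_min_aux : ∀ N, (∀ z, size z = N → tle (leftComb N) z) ∧
    (∀ a z, size z = N → tle (leftComb (a + N + 1)) (node (leftComb a) z)) := by
  intro N
  induction N using Nat.strong_induction_on with
  | _ N IH =>
    have hG : ∀ a z, size z = N → tle (leftComb (a + N + 1)) (node (leftComb a) z) := by
      intro a z hz
      cases z with
      | leaf =>
        simp [size] at hz
        subst hz
        exact tle_refl _
      | node p q =>
        have hp : size p < N := by simp [size] at hz; omega
        have hq : size q < N := by simp [size] at hz; omega
        have h1 : tle (leftComb (a + N + 1))
            (node (leftComb (a + size p + 1)) (leftComb (size q))) := by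
          have := (IH (size q) hq).2 (a + size p + 1) (leftComb (size q)) (by simp)
          have hsz : a + size p + 1 + size q + 1 = a + N + 1 := by
            simp [size] at hz; omega
          rwa [hsz] at this
        have h2 : tle (node (leftComb (a + size p + 1)) (leftComb (size q)))
            (node (node (leftComb a) p) (leftComb (size q))) := by
          apply tle_node_left
          exact (IH (size p) hp).2 a p rfl
        have h3 : tle (node (node (leftComb a) p) (leftComb (size q)))
            (node (node (leftComb a) p) q) := by
          apply tle_node_right
          exact (IH (size q) hq).1 q rfl
        have h4 : TamariStep (node (node (leftComb a) p) q) (node (leftComb a) (node p q)) :=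
          TamariStep.rot _ _ _
        exact Relation.ReflTransGen.tail (tle_trans (tle_trans h1 h2) h3) h4
    refine ⟨?_, hG⟩
    intro z hz
    cases z with
    | leaf => simp [size] at hz; subst hz; exact tle_refl _
    | node p q =>
      have hp : size p < N := by simp [size] at hz; omega
      have hq : size q < N := by simp [size] at hz; omega
      have h1 : tle (leftComb N) (node (leftComb (size p)) q) := by
        have := (IH (size q) hq).2 (size p) q rfl
        have hsz : size p + size q + 1 = N := by simp [size] at hz; omega
        rwa [hsz] at this
      exact tle_trans h1 (tle_node_left q ((IH (size p) hp).1 p rfl))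

lemma leftComb_min (z : PBT) : tle (leftComb (size z)) z :=
  (leftComb_min_aux (size z)).1 z rfl

end PBT
namespace PBT

/-! ### the bracket vector -/

/-- Left-subtree-size vector in infix order. -/
def lv : PBT → List ℕ
  | leaf => []
  | node l r => lv l ++ size l :: lv r

@[simp] lemma lv_length : ∀ t, (lv t).length = size t
  | leaf => rfl
  | node l r => by simp [lv, size, lv_length l, lv_length r]; omega

lemma lv_bound : ∀ (t : PBT) (i : ℕ), (lv t).getD i 0 ≤ i := by
  intro t
  induction t with
  | leaf => intro i; simp [lv]
  | node l r ihl ihr =>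
    intro i
    rcases lt_trichotomy i (size l) with h | h | h
    · rw [lv, List.getD_append _ _ _ _ (by simp [h])]
      exact ihl i
    · subst h
      rw [lv, List.getD_append_right _ _ _ _ (by simp)]
      simp
    · rw [lv, List.getD_append_right _ _ _ _ (by simp; omega)]
      have h2 : i - (lv l).length = (i - size l - 1) + 1 := by simp; omega
      rw [h2, List.getD_cons_succ]
      calc (lv r).getD (i - size l - 1) 0 ≤ i - size l - 1 := ihr _
        _ ≤ i := by omega

/-- `Dom a b` : `a` is componentwise at most `b` (with equal lengths). -/
def Dom (a b : List ℕ) : Prop := a.length = b.length ∧ ∀ i, a.getD i 0 ≤ b.getD i 0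

lemma Dom.refl (a : List ℕ) : Dom a a := ⟨rfl, fun _ => le_rfl⟩

lemma Dom.trans {a b c : List ℕ} (h1 : Dom a b) (h2 : Dom b c) : Dom a c :=
  ⟨h1.1.trans h2.1, fun i => (h1.2 i).trans (h2.2 i)⟩

lemma dom_mid {X C : List ℕ} {x y : ℕ} (h : y ≤ x) : Dom (X ++ y :: C) (X ++ x :: C) := by
  refine ⟨by simp, fun i => ?_⟩
  rcases lt_trichotomy i X.length with hi | hi | hi
  · rw [List.getD_append _ _ _ _ hi, List.getD_append _ _ _ _ hi]
  · subst hi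
    rw [List.getD_append_right _ _ _ _ le_rfl, List.getD_append_right _ _ _ _ le_rfl]
    simpa using h
  · rw [List.getD_append_right _ _ _ _ (by omega), List.getD_append_right _ _ _ _ (by omega)]
    have h2 : i - X.length = (i - X.length - 1) + 1 := by omega
    rw [h2, List.getD_cons_succ, List.getD_cons_succ]

lemma dom_app_left {A A' C : List ℕ} (h : Dom A A') : Dom (A ++ C) (A' ++ C) := by
  refine ⟨by simp [h.1], fun i => ?_⟩
  rcases lt_or_ge i A.length with hi | hi
  · rw [List.getD_append _ _ _ _ hi, List.getD_append _ _ _ _ (h.1 ▸ hi)]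
    exact h.2 i
  · rw [List.getD_append_right _ _ _ _ hi, List.getD_append_right _ _ _ _ (h.1 ▸ hi), h.1]

lemma dom_app_right {A C C' : List ℕ} (h : Dom C C') : Dom (A ++ C) (A ++ C') := by
  refine ⟨by simp [h.1], fun i => ?_⟩
  rcases lt_or_ge i A.length with hi | hi
  · rw [List.getD_append _ _ _ _ hi, List.getD_append _ _ _ _ hi]
  · rw [List.getD_append_right _ _ _ _ hi, List.getD_append_right _ _ _ _ hi]
    exact h.2 _

lemma step_dom {z z' : PBT} (h : TamariStep z z') : Dom (lv z') (lv z) := by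
  induction h with
  | rot a b c =>
    have e1 : lv (node (node a b) c) = (lv a ++ size a :: lv b) ++ (size (node a b)) :: lv c := by
      simp [lv]
    have e2 : lv (node a (node b c)) = (lv a ++ size a :: lv b) ++ (size b) :: lv c := by
      simp [lv]
    rw [e1, e2]
    exact dom_mid (by simp [size]; omega)
  | left r h ih =>
    rename_i l l'
    show Dom (lv l' ++ size l' :: lv r) (lv l ++ size l :: lv r)
    rw [step_size h]
    exact dom_app_left ih
  | right l h ih =>
    rename_i r r'
    exact dom_app_right (by exact dom_app_right (C := size l :: lv r') ⟨by simp [step_size h], by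
      intro i; cases i with
      | zero => simp [step_size h]
      | succ i => simpa using ih.2 i⟩ (A := []))

lemma tle_dom {z w : PBT} (h : tle z w) : Dom (lv w) (lv z) := by
  induction h with
  | refl => exact Dom.refl _
  | tail h1 h2 ih => exact (step_dom h2).trans ih

/-! ### sums decrease strictly along steps -/

lemma step_sum {z z' : PBT} (h : TamariStep z z') : (lv z').sum < (lv z).sum := by
  induction h with
  | rot a b c => simp [lv, List.sum_append, size]
  | left r h ih => simp [lv, List.sum_append, step_size h]; omega
  | right l h ih => simp [lv, List.sum_append]; omega

lemma tle_sum {z w : PBT} (h : tle z w) : z = w ∨ (lv w).sum < (lv z).sum := by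
  induction h with
  | refl => exact Or.inl rfl
  | tail h1 h2 ih =>
    right
    rcases ih with rfl | ih
    · exact step_sum h2
    · exact (step_sum h2).trans ih

end PBT
namespace PBT

/-! ### list helpers for set -/

lemma getD_set_self {l : List ℕ} {i v : ℕ} (h : i < l.length) :
    (l.set i v).getD i 0 = v := by
  rw [List.getD_eq_getElem?_getD, List.getElem?_set_self (by omega)]
  rfl

lemma getD_set_ne {l : List ℕ} {i j v : ℕ} (h : i ≠ j) :
    (l.set i v).getD j 0 = l.getD j 0 := by
  simp [List.getD_eq_getElem?_getD, List.getElem?_set_ne h]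

lemma sum_set_lt : ∀ (l : List ℕ) (i v : ℕ), i < l.length → v < l.getD i 0 →
    (l.set i v).sum < l.sum := by
  intro l
  induction l with
  | nil => intro i v h; simp at h
  | cons a l ih =>
    intro i v h hv
    cases i with
    | zero => simp at hv ⊢; omega
    | succ i =>
      simp only [List.set_cons_succ, List.sum_cons]
      have := ih i v (by simpa using h) (by simpa using hv)
      omega

/-! ### the spine rotation lemma -/

lemma spine : ∀ (p q : PBT) (m : ℕ), m < size p →
    ∃ z' i v, TamariStep (node p q) z' ∧ m < i ∧ i < size (node p q) ∧
      i - m - 1 ≤ v ∧ v < (lv (node p q)).getD i 0 ∧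
      lv z' = (lv (node p q)).set i v := by
  intro p
  induction p with
  | leaf => intro q m h; simp [size] at h
  | node a b iha ihb =>
    intro q m hm
    by_cases ha : size a ≤ m
    · -- rotate at the root
      refine ⟨node a (node b q), size (node a b), size b, TamariStep.rot a b q, hm, ?_, ?_, ?_, ?_⟩
      · simp [size]
      · simp [size]; omega
      · have : (lv (node (node a b) q)).getD (size (node a b)) 0 = size (node a b) := by
          show ((lv (node a b)) ++ size (node a b) :: lv q).getD _ 0 = _
          rw [List.getD_append_right _ _ _ _ (by simp), lv_length]
          simp
        rw [this]
        simp [size]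
      · show lv a ++ size a :: (lv b ++ size b :: lv q)
          = ((lv a ++ size a :: lv b) ++ size (node a b) :: lv q).set (size (node a b)) (size b)
        rw [List.set_append]
        have hl : ¬ (size (node a b) < (lv a ++ size a :: lv b).length) := by simp [size]; omega
        rw [if_neg hl]
        have : size (node a b) - (lv a ++ size a :: lv b).length = 0 := by simp [size]
        rw [this]
        simp
    · -- recurse into the left subtree
      push_neg at ha
      obtain ⟨z0, i, v, hstep, hmi, hilt, hge, hlt, hset⟩ := iha b m ha
      refine ⟨node z0 q, i, v, TamariStep.left q hstep, hmi, ?_, hge, ?_, ?_⟩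
      · have := hilt; simp [size] at this ⊢; omega
      · have hilen : i < (lv (node a b)).length := by rw [lv_length]; exact hilt
        show _ < ((lv (node a b)) ++ size (node a b) :: lv q).getD i 0
        rw [List.getD_append _ _ _ _ hilen]
        exact hlt
      · have hsz : size z0 = size (node a b) := step_size hstep
        show lv z0 ++ size z0 :: lv q
          = ((lv (node a b)) ++ size (node a b) :: lv q).set i v
        rw [List.set_append, if_pos (by rw [lv_length]; exact hilt), hset, hsz]

/-! ### Dom implies tle -/

lemma dom_tle_aux : ∀ (N : ℕ) (z w : PBT), size z + (lv z).sum ≤ N →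
    Dom (lv w) (lv z) → tle z w := by
  intro N
  induction N using Nat.strong_induction_on with
  | _ N IH =>
    intro z w hN hdom
    have hsz : size w = size z := by
      have := hdom.1; simpa using this
    cases z with
    | leaf =>
      have : w = leaf := size_eq_zero (by simp [size] at hsz ⊢; omega)
      subst this; exact tle_refl _
    | node p q =>
      cases w with
      | leaf => exfalso; simp [size] at hsz
      | node l r =>
        rcases lt_trichotomy (size p) (size l) with hpl | hpl | hpl
        · -- impossible
          exfalso
          have h1 : (lv (node l r)).getD (size l) 0 = size l := by
            show ((lv l) ++ size l :: lv r).getD _ 0 = _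
            rw [List.getD_append_right _ _ _ _ (by simp), lv_length]
            simp
          have h2 : (lv (node p q)).getD (size l) 0 ≤ size l - size p - 1 := by
            show ((lv p) ++ size p :: lv q).getD _ 0 ≤ _
            rw [List.getD_append_right _ _ _ _ (by simp; omega), lv_length]
            have : size l - size p = (size l - size p - 1) + 1 := by omega
            rw [this, List.getD_cons_succ]
            exact lv_bound _ _
          have := hdom.2 (size l)
          rw [h1] at this
          omega
        · -- equal sizes: split
          have hdl : Dom (lv l) (lv p) := by
            refine ⟨by simp [hpl], fun i => ?_⟩
            rcases lt_or_ge i (size l) with hi | hi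
            · have := hdom.2 i
              rwa [show lv (node l r) = lv l ++ size l :: lv r from rfl,
                show lv (node p q) = lv p ++ size p :: lv q from rfl,
                List.getD_append _ _ _ _ (by simpa using hi),
                List.getD_append _ _ _ _ (by simp; omega)] at this
            · rw [List.getD_eq_default _ _ (by simpa using hi),
                List.getD_eq_default _ _ (by simp; omega)]
          have hdr : Dom (lv r) (lv q) := by
            have hlen : (lv r).length = (lv q).length := by
              have := hdom.1; simp [size] at this ⊢; omega
            refine ⟨hlen, fun i => ?_⟩
            have := hdom.2 (size l + 1 + i)
            rwa [show lv (node l r) = lv l ++ size l :: lv r from rfl,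
              show lv (node p q) = lv p ++ size p :: lv q from rfl,
              List.getD_append_right _ _ _ _ (by simp; omega),
              List.getD_append_right _ _ _ _ (by simp; omega),
              lv_length, lv_length, show size l + 1 + i - size l = i + 1 by omega,
              show size l + 1 + i - size p = i + 1 by omega,
              List.getD_cons_succ, List.getD_cons_succ] at this
          have hsp : size p + (lv p).sum < N := by
            have : (lv p).sum ≤ (lv (node p q)).sum := by
              show (lv p).sum ≤ (lv p ++ size p :: lv q).sum
              simp [List.sum_append]
            have hs : size p < size (node p q) := by simp [size]
            omega
          have hsq : size q + (lv q).sum < N := by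
            have : (lv q).sum ≤ (lv (node p q)).sum := by
              show (lv q).sum ≤ (lv p ++ size p :: lv q).sum
              simp [List.sum_append]; omega
            have hs : size q < size (node p q) := by simp [size]
            omega
          exact tle_node (IH _ (by omega) p l le_rfl hdl) (IH _ (by omega) q r le_rfl hdr)
        · -- rotate and recurse
          obtain ⟨z', i, v, hstep, hmi, hilt, hge, hlt, hset⟩ := spine p q (size l) hpl
          have hdom' : Dom (lv (node l r)) (lv z') := by
            rw [hset]
            refine ⟨by simpa using hdom.1, fun j => ?_⟩
            by_cases hj : i = j
            · subst hj
              rw [getD_set_self (by rw [lv_length]; exact hilt)]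
              have hwv : (lv (node l r)).getD i 0 ≤ i - size l - 1 := by
                show ((lv l) ++ size l :: lv r).getD _ 0 ≤ _
                rw [List.getD_append_right _ _ _ _ (by simp; omega), lv_length]
                have : i - size l = (i - size l - 1) + 1 := by omega
                rw [this, List.getD_cons_succ]
                exact lv_bound _ _
              omega
            · rw [getD_set_ne hj]
              exact hdom.2 j
          have hmeas : size z' + (lv z').sum < N := by
            have h1 : size z' = size (node p q) := step_size hstep
            have h2 : (lv z').sum < (lv (node p q)).sum := by
              rw [hset]
              exact sum_set_lt _ _ _ (by rw [lv_length]; exact hilt) hlt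
            omega
          exact Relation.ReflTransGen.head hstep (IH _ (by omega) z' (node l r) le_rfl hdom')

lemma tle_iff_dom {z w : PBT} : tle z w ↔ Dom (lv w) (lv z) :=
  ⟨tle_dom, fun h => dom_tle_aux _ z w le_rfl h⟩

/-! ### lv is injective -/

lemma lv_inj : ∀ {z w : PBT}, lv z = lv w → z = w := by
  intro z
  induction z with
  | leaf =>
    intro w h
    have : size w = 0 := by rw [← lv_length, ← h]; rfl
    exact (size_eq_zero this).symm
  | node p q ihp ihq =>
    intro w h
    cases w with
    | leaf =>
      exfalso
      have : size (node p q) = 0 := by rw [← lv_length, h]; rfl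
      simp [size] at this
    | node l r =>
      have hd1 : Dom (lv (node l r)) (lv (node p q)) := h ▸ Dom.refl _
      have hd2 : Dom (lv (node p q)) (lv (node l r)) := h ▸ Dom.refl _
      have hsz : size p = size l := by
        by_contra hne
        rcases lt_or_gt_of_ne hne with hlt | hlt
        · have h1 : (lv (node l r)).getD (size l) 0 = size l := by
            show ((lv l) ++ size l :: lv r).getD _ 0 = _
            rw [List.getD_append_right _ _ _ _ (by simp), lv_length]; simp
          have h2 : (lv (node p q)).getD (size l) 0 ≤ size l - size p - 1 := by
            show ((lv p) ++ size p :: lv q).getD _ 0 ≤ _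
            rw [List.getD_append_right _ _ _ _ (by simp; omega), lv_length]
            have : size l - size p = (size l - size p - 1) + 1 := by omega
            rw [this, List.getD_cons_succ]
            exact lv_bound _ _
          have := hd1.2 (size l); rw [h1] at this; omega
        · have h1 : (lv (node p q)).getD (size p) 0 = size p := by
            show ((lv p) ++ size p :: lv q).getD _ 0 = _
            rw [List.getD_append_right _ _ _ _ (by simp), lv_length]; simp
          have h2 : (lv (node l r)).getD (size p) 0 ≤ size p - size l - 1 := by
            show ((lv l) ++ size l :: lv r).getD _ 0 ≤ _
            rw [List.getD_append_right _ _ _ _ (by simp; omega), lv_length]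
            have : size p - size l = (size p - size l - 1) + 1 := by omega
            rw [this, List.getD_cons_succ]
            exact lv_bound _ _
          have := hd2.2 (size p); rw [h1] at this; omega
      have happ : lv p = lv l ∧ size p :: lv q = size l :: lv r := by
        apply List.append_inj h
        simp [hsz]
      have := happ.2
      simp at this
      rw [ihp happ.1, ihq this.2]

end PBT
namespace PBT

@[simp] lemma lv_leftComb : ∀ n, lv (leftComb n) = List.range n
  | 0 => rfl
  | n + 1 => by
    show lv (leftComb n) ++ size (leftComb n) :: lv leaf = _
    rw [lv_leftComb n, size_leftComb, List.range_succ]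
    rfl

@[simp] lemma lv_rightComb : ∀ n, lv (rightComb n) = List.replicate n 0
  | 0 => rfl
  | n + 1 => by
    show lv leaf ++ size leaf :: lv (rightComb n) = _
    rw [lv_rightComb n]
    rfl

/-- Truncation of a tree to its first `m` infix vertices. -/
def trunc : PBT → ℕ → PBT
  | leaf, _ => leaf
  | node l r, m => if m ≤ size l then trunc l m else node l (trunc r (m - size l - 1))

lemma lv_trunc : ∀ (w : PBT) (m : ℕ), m ≤ size w → lv (trunc w m) = (lv w).take m := by
  intro w
  induction w with
  | leaf => intro m h; simp [size] at h; subst h; simp [trunc, lv]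
  | node l r ihl ihr =>
    intro m h
    by_cases hm : m ≤ size l
    · rw [trunc, if_pos hm, ihl m hm]
      show _ = (lv l ++ size l :: lv r).take m
      rw [List.take_append_of_le_length (by simpa using hm)]
    · rw [trunc, if_neg hm]
      push_neg at hm
      have hr : m - size l - 1 ≤ size r := by simp [size] at h; omega
      show lv l ++ size l :: lv (trunc r (m - size l - 1)) = (lv l ++ size l :: lv r).take m
      rw [List.take_append,
        List.take_of_length_le (show (lv l).length ≤ m by simp; omega),
        show m - (lv l).length = (m - size l - 1) + 1 by simp; omega,
        List.take_succ_cons, ihr _ hr]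

lemma size_trunc {w : PBT} {m : ℕ} (h : m ≤ size w) : size (trunc w m) = m := by
  rw [← lv_length, lv_trunc w m h, List.length_take, lv_length]
  omega

/-- The explicit Möbius values: `f` is supported on combs of right combs. -/
def f : PBT → ℤ
  | leaf => 1
  | node l r => if r = rightComb (size r) then (-1 : ℤ) ^ (size r) * f l else 0

lemma f_leftComb : ∀ n, f (leftComb n) = 1
  | 0 => rfl
  | n + 1 => by
    show f (node (leftComb n) leaf) = 1
    rw [f]
    simp [f_leftComb n, size, rightComb]

lemma f_rightComb (n : ℕ) (hn : 1 ≤ n) : f (rightComb n) = (-1 : ℤ) ^ (n - 1) := by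
  obtain ⟨m, rfl⟩ : ∃ m, n = m + 1 := ⟨n - 1, by omega⟩
  show f (node leaf (rightComb m)) = _
  rw [f]
  simp [f, size_rightComb]

/-! ### treesOfSize -/

lemma mem_treesOfSize : ∀ n z, z ∈ treesOfSize n ↔ size z = n := by
  intro n
  induction n using Nat.strong_induction_on with
  | _ n IH =>
    intro z
    cases n with
    | zero =>
      rw [show treesOfSize 0 = [leaf] from by rw [treesOfSize]]
      simp
      constructor
      · rintro rfl; rfl
      · intro h; exact size_eq_zero h
    | succ m =>
      rw [treesOfSize]
      simp only [List.mem_flatMap, List.mem_map, List.mem_attach, true_and, Subtype.exists]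
      constructor
      · rintro ⟨i, hi, l, hl, r, hr, rfl⟩
        have hi' : i ≤ m := by simpa [Nat.lt_succ_iff] using hi
        have hl' := (IH i (by omega) l).1 hl
        have hr' := (IH (m - i) (by omega) r).1 hr
        simp [size]; omega
      · intro hz
        cases z with
        | leaf => simp [size] at hz
        | node l r =>
          have hs : size l + size r + 1 = m + 1 := by simpa [size] using hz
          refine ⟨size l, by simp [Nat.lt_succ_iff]; omega, l,
            (IH (size l) (by omega) l).2 rfl, r, (IH (m - size l) (by omega) r).2 (by omega), rfl⟩

lemma nodup_flatMap' {α β : Type*} {l : List α} {g : α → List β} (hl : l.Nodup)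
    (h1 : ∀ a ∈ l, (g a).Nodup)
    (h2 : ∀ a ∈ l, ∀ b ∈ l, a ≠ b → ∀ x ∈ g a, x ∉ g b) :
    (l.flatMap g).Nodup := by
  induction l with
  | nil => simp
  | cons a l ih =>
    rw [List.flatMap_cons]
    apply List.Nodup.append
    · exact h1 a (by simp)
    · apply ih (hl.of_cons)
      · intro x hx; exact h1 x (by simp [hx])
      · intro x hx y hy hxy; exact h2 x (by simp [hx]) y (by simp [hy]) hxy
    · intro x hx hx'
      rw [List.mem_flatMap] at hx'
      obtain ⟨b, hb, hxb⟩ := hx'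
      have hab : a ≠ b := by rintro rfl; exact (List.nodup_cons.1 hl).1 hb
      exact h2 a (by simp) b (by simp [hb]) hab x hx hxb

lemma nodup_treesOfSize : ∀ n, (treesOfSize n).Nodup := by
  intro n
  induction n using Nat.strong_induction_on with
  | _ n IH =>
    cases n with
    | zero =>
      rw [show treesOfSize 0 = [leaf] from by rw [treesOfSize]]
      simp
    | succ m =>
      rw [treesOfSize]
      apply nodup_flatMap' (List.nodup_attach.2 List.nodup_range)
      · rintro ⟨i, hi⟩ _
        have hi' : i ≤ m := by simpa [Nat.lt_succ_iff] using hi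
        apply nodup_flatMap' (IH i (by omega))
        · intro l hl
          exact List.Nodup.map (fun x y h => by injection h) (IH (m - i) (by omega))
        · intro l1 h1 l2 h2 hne x hx1 hx2
          simp only [List.mem_map] at hx1 hx2
          obtain ⟨r1, _, rfl⟩ := hx1
          obtain ⟨r2, _, he⟩ := hx2
          injection he with e1 e2
          exact hne (e1.symm)
      · rintro ⟨i, hi⟩ _ ⟨j, hj⟩ _ hne x hx1 hx2
        simp only [List.mem_flatMap, List.mem_map] at hx1 hx2
        obtain ⟨l1, hl1, r1, _, rfl⟩ := hx1
        obtain ⟨l2, hl2, r2, _, he⟩ := hx2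
        injection he with e1 e2
        apply hne
        have hi' : i ≤ m := by simpa [Nat.lt_succ_iff] using hi
        have hj' : j ≤ m := by simpa [Nat.lt_succ_iff] using hj
        have s1 := (mem_treesOfSize i l1).1 hl1
        have s2 := (mem_treesOfSize j l2).1 hl2
        apply Subtype.ext
        show i = j
        rw [← s1, ← s2, e1]

/-! ### sum helpers -/

lemma sum_pick {α : Type*} [DecidableEq α] : ∀ (L : List α), L.Nodup → ∀ (r0 : α), r0 ∈ L →
    ∀ (h : α → ℤ),
    (L.map (fun r => if r = r0 then h r else 0)).sum = h r0 := by
  intro L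
  induction L with
  | nil => intro _ r0 h0; simp at h0
  | cons a L ih =>
    intro hnd r0 hr0 h
    rw [List.map_cons, List.sum_cons]
    by_cases ha : a = r0
    · subst ha
      rw [if_pos rfl]
      have : ∀ x ∈ L.map (fun r => if r = a then h r else 0), x = 0 := by
        intro x hx
        simp only [List.mem_map] at hx
        obtain ⟨r, hr, rfl⟩ := hx
        have : r ≠ a := by rintro rfl; exact (List.nodup_cons.1 hnd).1 hr
        rw [if_neg this]
      rw [List.sum_eq_zero this]
      ring
    · rw [if_neg ha]
      have hr0' : r0 ∈ L := by
        rcases hr0 with _ | h'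
        · exact absurd rfl ha
        · assumption
      rw [ih (List.nodup_cons.1 hnd).2 r0 hr0' h]
      ring

lemma sum_map_add {α : Type*} (L : List α) (g1 g2 : α → ℤ) :
    (L.map (fun x => g1 x + g2 x)).sum = (L.map g1).sum + (L.map g2).sum := by
  induction L with
  | nil => simp
  | cons a L ih => simp [ih]; ring

end PBT
namespace PBT

lemma getD_take_lt {l : List ℕ} {n j : ℕ} (h : j < n) : (l.take n).getD j 0 = l.getD j 0 := by
  rcases lt_or_ge j l.length with hj | hj
  · rw [List.getD_eq_getElem?_getD, List.getD_eq_getElem?_getD,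
      List.getElem?_take_of_lt h]
  · rw [List.getD_eq_default _ _ (by simp; omega), List.getD_eq_default _ _ hj]

lemma getD_take_ge {l : List ℕ} {n j : ℕ} (h : n ≤ j) : (l.take n).getD j 0 = 0 :=
  List.getD_eq_default _ _ (by simp; omega)

lemma getD_replicate {n j c : ℕ} : (List.replicate n c).getD j 0 = if j < n then c else 0 := by
  rcases lt_or_ge j n with h | h
  · rw [List.getD_eq_getElem?_getD, List.getElem?_replicate, if_pos h, if_pos h]
    rfl
  · rw [List.getD_eq_default _ _ (by simpa using h), if_neg (by omega)]

lemma getD_range {n j : ℕ} : (List.range n).getD j 0 = if j < n then j else 0 := by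
  rcases lt_or_ge j n with h | h
  · rw [List.getD_eq_getElem?_getD, List.getElem?_range h, if_pos h]
    rfl
  · rw [List.getD_eq_default _ _ (by simpa using h), if_neg (by omega)]

lemma take_succ_getD {l : List ℕ} {k : ℕ} (h : k < l.length) :
    l.take (k + 1) = l.take k ++ [l.getD k 0] := by
  rw [List.take_succ, List.getElem?_eq_getElem h]
  simp [List.getD_eq_getElem?_getD, List.getElem?_eq_getElem h]

lemma sum_map_flatMap {α β : Type*} (L : List α) (g : α → List β) (h : β → ℤ) :
    ((L.flatMap g).map h).sum = (L.map (fun a => ((g a).map h).sum)).sum := by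
  induction L with
  | nil => simp
  | cons a L ih => simp [List.flatMap_cons, ih]

lemma sum_map_mul {α : Type*} (L : List α) (c : ℤ) (g : α → ℤ) :
    (L.map (fun x => c * g x)).sum = c * (L.map g).sum := by
  induction L with
  | nil => simp
  | cons a L ih => simp [ih]; ring

lemma trunc_zero : ∀ w : PBT, trunc w 0 = leaf
  | leaf => rfl
  | node l r => by rw [trunc, if_pos (Nat.zero_le _), trunc_zero l]

lemma trunc_full (w : PBT) : trunc w (size w) = w := by
  apply lv_inj
  rw [lv_trunc w _ le_rfl, List.take_of_length_le (by simp)]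

lemma trunc_eq_leftComb_iff {w : PBT} {i : ℕ} (h : i ≤ size w) :
    trunc w i = leftComb i ↔ (lv w).take i = List.range i := by
  constructor
  · intro he
    rw [← lv_trunc w i h, he, lv_leftComb]
  · intro he
    apply lv_inj
    rw [lv_trunc w i h, he, lv_leftComb]

end PBT
namespace PBT

/-- Characterization: when does a tree with right-comb right subtree sit below `w`. -/
lemma TR {w l : PBT} {i m : ℕ} (hw : size w = m + 1) (hl : size l = i) (him : i ≤ m) :
    tle (node l (rightComb (m - i))) w ↔
      ((∀ j, i < j → (lv w).getD j 0 = 0) ∧ tle l (trunc w i)) := by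
  have hiw : i ≤ size w := by omega
  have hlv : lv (node l (rightComb (m - i))) = lv l ++ i :: List.replicate (m - i) 0 := by
    show lv l ++ size l :: lv (rightComb (m - i)) = _
    rw [hl, lv_rightComb]
  have hlenw : (lv w).length = m + 1 := by rw [lv_length, hw]
  rw [tle_iff_dom, tle_iff_dom, hlv, lv_trunc w i hiw]
  constructor
  · rintro ⟨hlen, hd⟩
    refine ⟨?_, ?_, ?_⟩
    · intro j hj
      rcases lt_or_ge j (m + 1) with hjm | hjm
      · have := hd j
        rw [List.getD_append_right _ _ _ _ (by rw [lv_length, hl]; omega)] at this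
        rw [lv_length, hl] at this
        have hj2 : j - i = (j - i - 1) + 1 := by omega
        rw [hj2, List.getD_cons_succ, getD_replicate] at this
        split at this <;> omega
      · exact List.getD_eq_default _ _ (by omega)
    · simp [hl, hw]
      omega
    · intro j
      rcases lt_or_ge j i with hj | hj
      · rw [getD_take_lt hj]
        have := hd j
        rwa [List.getD_append _ _ _ _ (by rw [lv_length, hl]; exact hj)] at this
      · rw [getD_take_ge hj]
        exact Nat.zero_le _
  · rintro ⟨hQ, hlen, hd⟩
    refine ⟨by simp [hlenw, hl]; omega, ?_⟩
    intro j
    rcases lt_trichotomy j i with hj | hj | hj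
    · rw [List.getD_append _ _ _ _ (by rw [lv_length, hl]; exact hj)]
      have := hd j
      rwa [getD_take_lt hj] at this
    · subst hj
      rw [List.getD_append_right _ _ _ _ (by rw [lv_length, hl]), lv_length, hl,
        Nat.sub_self, List.getD_cons_zero]
      exact lv_bound w j
    · rw [hQ j hj]
      exact Nat.zero_le _

end PBT
namespace PBT

/-- Validity of bracket vectors: if the vector is `range k` then zeros after
position `k`, the entry at `k` is `0` or `k`. -/
lemma star (w : PBT) (k : ℕ) (hk : k < size w)
    (hpre : ∀ j, j < k → (lv w).getD j 0 = j)
    (hpost : ∀ j, k < j → (lv w).getD j 0 = 0)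
    (hne : (lv w).getD k 0 ≠ k) : (lv w).getD k 0 = 0 := by
  cases w with
  | leaf => simp [size] at hk
  | node l r =>
    have hroot : (lv (node l r)).getD (size l) 0 = size l := by
      show ((lv l) ++ size l :: lv r).getD _ 0 = _
      rw [List.getD_append_right _ _ _ _ (by simp), lv_length, Nat.sub_self,
        List.getD_cons_zero]
    rcases lt_trichotomy (size l) k with hlk | hlk | hlk
    · -- size l < k : then k = size l + 1 and entry is first of lv r
      have hval : ∀ j', (lv (node l r)).getD (size l + 1 + j') 0 = (lv r).getD j' 0 := by
        intro j'
        show ((lv l) ++ size l :: lv r).getD _ 0 = _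
        rw [List.getD_append_right _ _ _ _ (by simp; omega), lv_length,
          show size l + 1 + j' - size l = j' + 1 by omega, List.getD_cons_succ]
      rcases lt_or_ge (size l + 1) k with h2 | h2
      · exfalso
        have := hpre (size l + 1) h2
        rw [show size l + 1 = size l + 1 + 0 by omega, hval 0] at this
        have := lv_bound r 0
        omega
      · have hk2 : k = size l + 1 := by omega
        rw [hk2, show size l + 1 = size l + 1 + 0 by omega, hval 0]
        have := lv_bound r 0
        omega
    · exact absurd (hlk ▸ hroot) hne
    · exfalso
      have := hpost (size l) hlk
      rw [hroot] at this
      omega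

end PBT
namespace PBT

open Classical in
lemma KSI : ∀ (N : ℕ) (w : PBT), size w ≤ N →
    ((treesOfSize (size w)).map (fun z => if tle z w then f z else 0)).sum
      = if w = leftComb (size w) then (1 : ℤ) else 0 := by
  intro N
  induction N using Nat.strong_induction_on with
  | _ N IH =>
    intro w hN
    rcases Nat.eq_zero_or_pos (size w) with h0 | hpos
    · have hwleaf : w = leaf := size_eq_zero h0
      subst hwleaf
      rw [show size leaf = 0 from rfl, show treesOfSize 0 = [leaf] from by rw [treesOfSize]]
      simp only [List.map_cons, List.map_nil, List.sum_cons, List.sum_nil]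
      rw [if_pos (tle_refl leaf)]
      simp [f, leftComb]
    obtain ⟨m, hw⟩ : ∃ m, size w = m + 1 := ⟨size w - 1, by omega⟩
    have hmN : m < N := by omega
    rw [hw, treesOfSize, sum_map_flatMap]
    have key : ∀ i : ℕ, i ≤ m →
        (((treesOfSize i).flatMap
            (fun l => (treesOfSize (m - i)).map (fun r => node l r))).map
          (fun z => if tle z w then f z else 0)).sum
        = if ((∀ j, i < j → (lv w).getD j 0 = 0) ∧ trunc w i = leftComb i)
            then (-1 : ℤ)^(m - i) else 0 := by
      intro i him
      have hiw : i ≤ size w := by omega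
      rw [sum_map_flatMap]
      have inner : ∀ l ∈ treesOfSize i,
          (((treesOfSize (m - i)).map (fun r => node l r)).map
            (fun z => if tle z w then f z else 0)).sum
          = if ((∀ j, i < j → (lv w).getD j 0 = 0) ∧ tle l (trunc w i))
              then (-1 : ℤ)^(m - i) * f l else 0 := by
        intro l hlmem
        have hsl : size l = i := (mem_treesOfSize _ _).1 hlmem
        rw [List.map_map]
        have hstep1 : ((treesOfSize (m - i)).map
            ((fun z => if tle z w then f z else 0) ∘ (fun r => node l r)))
            = ((treesOfSize (m - i)).map (fun r => if r = rightComb (m - i) then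
                (if tle (node l r) w then f (node l r) else 0) else 0)) := by
          apply List.map_congr_left
          intro r hr
          have hsr : size r = m - i := (mem_treesOfSize _ _).1 hr
          simp only [Function.comp]
          by_cases hrc : r = rightComb (m - i)
          · rw [if_pos hrc]
          · rw [if_neg hrc]
            have hf : f (node l r) = 0 := by
              rw [f, if_neg (by rw [hsr]; exact hrc)]
            by_cases ht : tle (node l r) w
            · rw [if_pos ht, hf]
            · rw [if_neg ht]
        rw [hstep1, sum_pick _ (nodup_treesOfSize _) _
          ((mem_treesOfSize _ _).2 (size_rightComb _)) _]
        have hfval : f (node l (rightComb (m - i))) = (-1 : ℤ)^(m - i) * f l := by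
          rw [f, if_pos (by rw [size_rightComb]), size_rightComb]
        rw [hfval]
        by_cases hTR : tle (node l (rightComb (m - i))) w
        · rw [if_pos hTR, if_pos ((TR hw hsl him).1 hTR)]
        · rw [if_neg hTR, if_neg (fun hc => hTR ((TR hw hsl him).2 hc))]
      rw [List.map_congr_left inner]
      by_cases hQ : ∀ j, i < j → (lv w).getD j 0 = 0
      · have hpt : ∀ l ∈ treesOfSize i,
            (if ((∀ j, i < j → (lv w).getD j 0 = 0) ∧ tle l (trunc w i))
              then (-1 : ℤ)^(m - i) * f l else 0)
            = (-1 : ℤ)^(m - i) * (if tle l (trunc w i) then f l else 0) := by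
          intro l _
          by_cases ht : tle l (trunc w i)
          · rw [if_pos ⟨hQ, ht⟩, if_pos ht]
          · rw [if_neg (fun hc => ht hc.2), if_neg ht, mul_zero]
        rw [List.map_congr_left hpt, sum_map_mul]
        have hIH := IH i (by omega) (trunc w i) (le_of_eq (size_trunc hiw))
        rw [size_trunc hiw] at hIH
        rw [hIH]
        by_cases hP : trunc w i = leftComb i
        · rw [if_pos hP, if_pos ⟨hQ, hP⟩, mul_one]
        · rw [if_neg hP, if_neg (fun hc => hP hc.2), mul_zero]
      · rw [if_neg (fun hc => hQ hc.1)]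
        apply List.sum_eq_zero
        intro x hx
        simp only [List.mem_map] at hx
        obtain ⟨l, _, rfl⟩ := hx
        rw [if_neg (fun hc => hQ hc.1)]
    -- replace attach-sum by a plain sum over range
    have hattach : ((List.range (m + 1)).attach.map
        (fun i => (((treesOfSize i.1).flatMap
            (fun l => (treesOfSize (m - i.1)).map (fun r => node l r))).map
          (fun z => if tle z w then f z else 0)).sum)).sum
        = ((List.range (m + 1)).map
          (fun i => if ((∀ j, i < j → (lv w).getD j 0 = 0) ∧ trunc w i = leftComb i)
            then (-1 : ℤ)^(m - i) else 0)).sum := by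
      rw [show (List.range (m + 1)).map
          (fun i => if ((∀ j, i < j → (lv w).getD j 0 = 0) ∧ trunc w i = leftComb i)
            then (-1 : ℤ)^(m - i) else 0)
        = (List.range (m + 1)).attach.map
          ((fun i => if ((∀ j, i < j → (lv w).getD j 0 = 0) ∧ trunc w i = leftComb i)
            then (-1 : ℤ)^(m - i) else 0) ∘ Subtype.val) from by
          rw [← List.map_map, List.attach_map_subtype_val]]
      apply congrArg
      apply List.map_congr_left
      rintro ⟨i, hi⟩ _
      have him : i ≤ m := by simpa [Nat.lt_succ_iff] using List.mem_range.1 hi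
      exact key i him
    rw [hattach]
    -- final combinatorial evaluation
    by_cases hwl : w = leftComb (m + 1)
    · rw [if_pos hwl]
      have hlvw : lv w = List.range (m + 1) := by rw [hwl, lv_leftComb]
      have hpt : ∀ i ∈ List.range (m + 1),
          (if ((∀ j, i < j → (lv w).getD j 0 = 0) ∧ trunc w i = leftComb i)
            then (-1 : ℤ)^(m - i) else 0)
          = (if i = m then (1 : ℤ) else 0) := by
        intro i hi
        have him : i ≤ m := by simpa [Nat.lt_succ_iff] using List.mem_range.1 hi
        by_cases heq : i = m
        · have hQ : ∀ j, i < j → (lv w).getD j 0 = 0 := by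
            intro j hj
            rw [hlvw, getD_range, if_neg (by omega)]
          have hP : trunc w i = leftComb i := by
            rw [trunc_eq_leftComb_iff (by omega), hlvw, List.take_range]
            congr 1
            omega
          rw [if_pos (And.intro hQ hP), if_pos heq, heq, Nat.sub_self, pow_zero]
        · rw [if_neg heq, if_neg ?_]
          rintro ⟨hQ, -⟩
          have := hQ (i + 1) (by omega)
          rw [hlvw, getD_range, if_pos (by omega)] at this
          omega
      rw [List.map_congr_left hpt,
        sum_pick _ List.nodup_range m (List.mem_range.2 (by omega)) (fun _ => (1 : ℤ))]
    · rw [if_neg hwl]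
      set k := Nat.findGreatest (fun i => trunc w i = leftComb i) (m + 1) with hk
      have hP0 : trunc w 0 = leftComb 0 := by rw [trunc_zero]; rfl
      have hPk : trunc w k = leftComb k :=
        Nat.findGreatest_spec (P := fun i => trunc w i = leftComb i) (Nat.zero_le _) hP0
      have hkle : k ≤ m + 1 := Nat.findGreatest_le (P := fun i => trunc w i = leftComb i) _
      have hkne : k ≠ m + 1 := by
        intro hkeq
        apply hwl
        have h2 := hPk
        rw [hkeq] at h2
        rw [← hw] at h2 ⊢
        rw [trunc_full] at h2
        rw [hw] at h2 ⊢
        exact h2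
      have hkm : k ≤ m := by omega
      have hk1 : 1 ≤ k := by
        apply Nat.le_findGreatest (P := fun i => trunc w i = leftComb i) (by omega)
        show trunc w 1 = leftComb 1
        rw [trunc_eq_leftComb_iff (show 1 ≤ size w by omega)]
        have hlen : 0 < (lv w).length := by rw [lv_length]; omega
        rw [show (1 : ℕ) = 0 + 1 from rfl, take_succ_getD (by omega)]
        have h00 : (lv w).getD 0 0 = 0 := Nat.le_zero.1 (lv_bound w 0)
        rw [h00]
        rfl
      have hPmono : ∀ i j, i ≤ j → j ≤ m + 1 → trunc w j = leftComb j → trunc w i = leftComb i := by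
        intro i j hij hjm hPj
        have hPj' : (lv w).take j = List.range j := by
          rw [← trunc_eq_leftComb_iff (show j ≤ size w by omega)]
          exact hPj
        show trunc w i = leftComb i
        rw [trunc_eq_leftComb_iff (show i ≤ size w by omega)]
        have h1 : (lv w).take i = ((lv w).take j).take i := by
          rw [List.take_take]
          congr 1
          omega
        rw [h1, hPj', List.take_range]
        congr 1
        omega
      have hPle : ∀ i, i ≤ m + 1 → (trunc w i = leftComb i ↔ i ≤ k) := by
        intro i him
        constructor
        · intro hPi
          by_contra hik
          exact Nat.findGreatest_is_greatest (P := fun i => trunc w i = leftComb i)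
            (by omega) him hPi
        · intro hik
          exact hPmono i k hik hkle hPk
      have hpre : ∀ j, j < k → (lv w).getD j 0 = j := by
        intro j hj
        have htk : (lv w).take k = List.range k := by
          rw [← trunc_eq_leftComb_iff (show k ≤ size w by omega)]
          exact hPk
        rw [← getD_take_lt hj, htk, getD_range, if_pos hj]
      by_cases hQk : ∀ j, k < j → (lv w).getD j 0 = 0
      · -- two adjacent surviving terms cancel
        have hvk : (lv w).getD k 0 ≠ k := by
          intro hvkk
          have hnk : ¬ (trunc w (k + 1) = leftComb (k + 1)) :=
            Nat.findGreatest_is_greatest (P := fun i => trunc w i = leftComb i)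
              (n := m + 1) (by omega) (by omega)
          apply hnk
          rw [trunc_eq_leftComb_iff (show k + 1 ≤ size w by omega),
            take_succ_getD (show k < (lv w).length by rw [lv_length]; omega),
            hvkk, List.range_succ]
          congr 1
          rw [← trunc_eq_leftComb_iff (show k ≤ size w by omega)]
          exact hPk
        have hvk0 : (lv w).getD k 0 = 0 := star w k (by omega) hpre hQk hvk
        have hQk1 : ∀ j, k - 1 < j → (lv w).getD j 0 = 0 := by
          intro j hj
          rcases eq_or_lt_of_le (show k ≤ j by omega) with rfl | hj2
          · exact hvk0
          · exact hQk j hj2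
        have hpt : ∀ i ∈ List.range (m + 1),
            (if ((∀ j, i < j → (lv w).getD j 0 = 0) ∧ trunc w i = leftComb i)
              then (-1 : ℤ)^(m - i) else 0)
            = (if i = k - 1 then (-1 : ℤ)^(m - (k - 1)) else 0)
              + (if i = k then (-1 : ℤ)^(m - k) else 0) := by
          intro i hi
          have him : i ≤ m := by simpa [Nat.lt_succ_iff] using List.mem_range.1 hi
          by_cases hik : i = k
          · subst hik
            rw [if_pos ⟨hQk, hPk⟩, if_neg (by omega), if_pos rfl, zero_add]
          · by_cases hik1 : i = k - 1
            · subst hik1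
              rw [if_pos ⟨hQk1, (hPle (k - 1) (by omega)).2 (by omega)⟩,
                if_pos rfl, if_neg (by omega), add_zero]
            · rw [if_neg ?_, if_neg hik1, if_neg hik, add_zero]
              rintro ⟨hQi, hPi⟩
              have hikk : i ≤ k := (hPle i (by omega)).1 hPi
              have hiklt : i < k - 1 := by omega
              have h1 := hQi (k - 1) (by omega)
              have h2 := hpre (k - 1) (by omega)
              omega
        rw [List.map_congr_left hpt, sum_map_add,
          sum_pick _ List.nodup_range (k - 1) (List.mem_range.2 (by omega)) _,
          sum_pick _ List.nodup_range k (List.mem_range.2 (by omega)) _]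
        have : m - (k - 1) = (m - k) + 1 := by omega
        rw [this, pow_succ]
        ring
      · -- no surviving term at all
        apply List.sum_eq_zero
        intro x hx
        simp only [List.mem_map] at hx
        obtain ⟨i, hi, rfl⟩ := hx
        rw [if_neg ?_]
        rintro ⟨hQi, hPi⟩
        apply hQk
        intro j hj
        have him : i ≤ m := by simpa [Nat.lt_succ_iff] using List.mem_range.1 hi
        have hik : i ≤ k := (hPle i (by omega)).1 hPi
        exact hQi j (by omega)

end PBT
namespace PBT

lemma lv_mem_lt : ∀ (w : PBT) (x : ℕ), x ∈ lv w → x < size w := by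
  intro w
  induction w with
  | leaf => intro x hx; simp [lv] at hx
  | node l r ihl ihr =>
    intro x hx
    rw [lv] at hx
    simp only [List.mem_append, List.mem_cons] at hx
    rcases hx with h | h | h
    · have := ihl x h; simp [size]; omega
    · subst h; simp [size]
    · have := ihr x h; simp [size]; omega

lemma sum_le_of_forall_le : ∀ (l : List ℕ) (c : ℕ), (∀ x ∈ l, x ≤ c) → l.sum ≤ c * l.length := by
  intro l
  induction l with
  | nil => intro c _; simp
  | cons a l ih =>
    intro c h
    have h1 : a ≤ c := h a (by simp)
    have h2 := ih c (fun x hx => h x (by simp [hx]))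
    simp only [List.sum_cons, List.length_cons]
    calc a + l.sum ≤ c + c * l.length := by omega
      _ = c * (l.length + 1) := by ring

lemma sum_lv_le (w : PBT) : (lv w).sum ≤ size w * size w := by
  have := sum_le_of_forall_le (lv w) (size w) (fun x hx => le_of_lt (lv_mem_lt w x hx))
  rwa [lv_length] at this

open Classical in
lemma mu_eq_f (μ : PBT → PBT → ℤ)
    (hμrefl : ∀ t : PBT, μ t t = 1)
    (hμsum : ∀ s t : PBT, s ≠ t → tle s t →
      ((treesOfSize (size t)).map
        (fun z => if tle s z ∧ tle z t then μ s z else 0)).sum = 0) :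
    ∀ w : PBT, μ (leftComb (size w)) w = f w := by
  have main : ∀ K w, size w * size w - (lv w).sum ≤ K → μ (leftComb (size w)) w = f w := by
    intro K
    induction K using Nat.strong_induction_on with
    | _ K IH =>
      intro w hK
      by_cases hwc : w = leftComb (size w)
      · conv_lhs => rw [← hwc]
        rw [hμrefl w, hwc, f_leftComb]
      · have hcw : tle (leftComb (size w)) w := leftComb_min w
        have hne : leftComb (size w) ≠ w := fun h => hwc h.symm
        have hsum := hμsum (leftComb (size w)) w hne hcw
        have hKSI := KSI (size w) w le_rfl
        rw [if_neg hwc] at hKSI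
        have hnod : (treesOfSize (size w)).Nodup := nodup_treesOfSize _
        have hwL : w ∈ treesOfSize (size w) := (mem_treesOfSize _ w).2 rfl
        rw [← List.sum_toFinset _ hnod] at hsum hKSI
        have hwF : w ∈ (treesOfSize (size w)).toFinset := List.mem_toFinset.2 hwL
        rw [← Finset.add_sum_erase _ _ hwF] at hsum hKSI
        rw [if_pos ⟨hcw, tle_refl w⟩] at hsum
        rw [if_pos (tle_refl w)] at hKSI
        have herase : (∑ z ∈ ((treesOfSize (size w)).toFinset).erase w,
              (if tle (leftComb (size w)) z ∧ tle z w then μ (leftComb (size w)) z else 0))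
            = ∑ z ∈ ((treesOfSize (size w)).toFinset).erase w,
              (if tle z w then f z else 0) := by
          apply Finset.sum_congr rfl
          intro z hz
          have hzw : z ≠ w := Finset.ne_of_mem_erase hz
          have hzL : z ∈ treesOfSize (size w) :=
            List.mem_toFinset.1 (Finset.mem_of_mem_erase hz)
          have hsz : size z = size w := (mem_treesOfSize _ z).1 hzL
          by_cases htz : tle z w
          · have hcz : tle (leftComb (size w)) z := by
              rw [← hsz]; exact leftComb_min z
            rw [if_pos ⟨hcz, htz⟩, if_pos htz]
            have hlt : (lv w).sum < (lv z).sum := by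
              rcases tle_sum htz with h | h
              · exact absurd h hzw
              · exact h
            have hb := sum_lv_le z
            rw [hsz] at hb
            have := IH (size w * size w - (lv z).sum) (by omega) z
              (by rw [hsz])
            rw [hsz] at this
            exact this
          · rw [if_neg (fun hc => htz hc.2), if_neg htz]
        rw [herase] at hsum
        omega
  intro w
  exact main (size w * size w - (lv w).sum) w le_rfl

end PBT


open PBT in
open Classical in
/-- for trees of the form `Y ∖ t = node leaf t` with `n` internal
vertices, the Möbius number `μ(c_n, Y ∖ t)` of the Tamari lattice is nonzero if
and only if `Y ∖ t` is the right comb `d_n`, in which case it equals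
`(-1)^{n-1}` (Björner–Wachs). -/
theorem tamari_mobius_right_comb (μ : PBT → PBT → ℤ)
    (hμrefl : ∀ t : PBT, μ t t = 1)
    (hμnot : ∀ s t : PBT, ¬ tle s t → μ s t = 0)
    (hμsum : ∀ s t : PBT, s ≠ t → tle s t →
      ((treesOfSize (size t)).map
        (fun z => if tle s z ∧ tle z t then μ s z else 0)).sum = 0) :
    (∀ t : PBT,
      μ (leftComb (size t + 1)) (PBT.node PBT.leaf t) ≠ 0 ↔
        PBT.node PBT.leaf t = rightComb (size t + 1)) ∧
    (∀ n : ℕ, 1 ≤ n →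
      μ (leftComb n) (rightComb n) = (-1 : ℤ) ^ (n - 1)) := by
  have hf := mu_eq_f μ hμrefl hμsum
  constructor
  · intro t
    have h1 : size (PBT.node PBT.leaf t) = size t + 1 := by simp [size]
    have h2 := hf (PBT.node PBT.leaf t)
    rw [h1] at h2
    rw [h2]
    have h3 : f (PBT.node PBT.leaf t)
        = if t = rightComb (size t) then (-1 : ℤ) ^ (size t) else 0 := by
      rw [f]
      by_cases h : t = rightComb (size t)
      · rw [if_pos h, if_pos h]
        show _ * f PBT.leaf = _
        rw [show f PBT.leaf = 1 from rfl, mul_one]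
      · rw [if_neg h, if_neg h]
    rw [h3]
    constructor
    · intro hne
      by_cases h : t = rightComb (size t)
      · rw [show rightComb (size t + 1) = PBT.node PBT.leaf (rightComb (size t)) from rfl, ← h]
      · rw [if_neg h] at hne
        exact absurd rfl hne
    · intro heq
      have ht : t = rightComb (size t) := by
        have he2 : PBT.node PBT.leaf t = PBT.node PBT.leaf (rightComb (size t)) := by
          rw [heq]
          rfl
        injection he2 with a b
      rw [if_pos ht]
      exact pow_ne_zero _ (by norm_num)
  · intro n hn
    obtain ⟨m, rfl⟩ : ∃ m, n = m + 1 := ⟨n - 1, by omega⟩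
    have h2 := hf (rightComb (m + 1))
    rw [size_rightComb] at h2
    rw [h2, f_rightComb _ (by omega)]
end
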